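/- The degenerate r-Whitney numbers of the second kind satisfy W_{m,λ}^{(r+1)}(n,k) = Σ_{l=k}^{n} C(n,l) (1)_{n−l,λ} W_{m,λ}^{(r)}(l,k), where (1)_{j,λ} = 1·(1−λ)···(1−(j−1)λ). -/

import Mathlib

open Finset

/-- generalized falling factorial: (x)_{n,λ} = x(x-λ)···(x-(n-1)λ) -/
def dff (lam x : ℝ) (n : ℕ) : ℝ := ∏ i ∈ Finset.range n, (x - i * lam)

/-- generalized rising factorial: ⟨x⟩_{n,λ} = x(x+λ)···(x+(n-1)λ) -/
def drf (lam x : ℝ) (n : ℕ) : ℝ := ∏ i ∈ Finset.range n, (x + i * lam)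

/-!
Since `m x + r + 1 = (m x + r) + 1`, the λ-analogue of Vandermonde's identity,
`(x + y)_{n,λ} = ∑ C(n,l) (x)_{l,λ} (y)_{n-l,λ}`, expands the left side through the
`(m x + r)_{l,λ}`. Expanding each of these in the falling factorials `(x)_j` and exchanging the
two sums gives a second expansion of `(m x + r + 1)_{n,λ}`; the coefficients agree because the
`(x)_j` are linearly independent functions, as evaluation at `x = 0, 1, 2, …` shows.
-/

lemma dff_succ (lam x : ℝ) (n : ℕ) : dff lam x (n + 1) = dff lam x n * (x - n * lam) :=
  prod_range_succ _ _

lemma dff_add (lam x y : ℝ) (n : ℕ) :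
    dff lam (x + y) n =
      ∑ l ∈ range (n + 1), (n.choose l : ℝ) * (dff lam x l * dff lam y (n - l)) := by
  rw [← Nat.sum_antidiagonal_eq_sum_range_succ
    (fun i j => (n.choose i : ℝ) * (dff lam x i * dff lam y j))]
  induction n with
  | zero => simp [dff]
  | succ n ih =>
    rw [sum_antidiagonal_choose_succ_mul (fun i j => dff lam x i * dff lam y j), dff_succ, ih,
      sum_mul, ← sum_add_distrib]
    refine sum_congr rfl fun ij hij => ?_
    rw [HasAntidiagonal.mem_antidiagonal] at hij
    have hn : (n : ℝ) = ij.1 + ij.2 := by exact_mod_cast hij.symm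
    rw [← Nat.choose_symm_of_eq_add hij.symm, dff_succ, dff_succ, hn]
    ring

lemma dff_one_natCast_of_lt {k j : ℕ} (h : k < j) : dff 1 (k : ℝ) j = 0 :=
  prod_eq_zero (mem_range.mpr h) (by simp)

lemma dff_one_natCast_self_ne_zero (k : ℕ) : dff 1 (k : ℝ) k ≠ 0 :=
  prod_ne_zero_iff.mpr fun i hi => sub_ne_zero.mpr (by
    have : (i : ℝ) < k := by exact_mod_cast mem_range.mp hi
    simpa using this.ne')

lemma eq_zero_of_sum_mul_dff_one_eq_zero {N : ℕ} {c : ℕ → ℝ}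
    (h : ∀ x : ℝ, ∑ j ∈ range N, c j * dff 1 x j = 0) : ∀ k < N, c k = 0 := by
  intro k
  induction k using Nat.strong_induction_on with
  | _ k ih =>
    intro hk
    have hsum : ∑ j ∈ range N, c j * dff 1 (k : ℝ) j = c k * dff 1 (k : ℝ) k := by
      refine sum_eq_single_of_mem k (mem_range.mpr hk) fun j _ hjk => ?_
      rcases hjk.lt_or_gt with hjk | hkj
      · rw [ih j hjk (hjk.trans hk), zero_mul]
      · rw [dff_one_natCast_of_lt hkj, mul_zero]
    exact (mul_eq_zero.mp (hsum.symm.trans (h k))).resolve_right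
      (dff_one_natCast_self_ne_zero k)

lemma eq_of_sum_mul_dff_one_eq {N : ℕ} {a b : ℕ → ℝ}
    (h : ∀ x : ℝ, ∑ j ∈ range N, a j * dff 1 x j = ∑ j ∈ range N, b j * dff 1 x j) :
    ∀ k < N, a k = b k := by
  have hzero := eq_zero_of_sum_mul_dff_one_eq_zero (N := N) (c := a - b) fun x => by
    simp only [Pi.sub_apply, sub_mul, sum_sub_distrib, h x, sub_self]
  exact fun k hk => sub_eq_zero.mp (hzero k hk)

lemma dff_add_eq_sum_of_expansion (lam y z : ℝ) (W : ℕ → ℕ → ℝ) (g : ℕ → ℝ) (n : ℕ)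
    (hy : ∀ l ≤ n, dff lam y l = ∑ j ∈ range (l + 1), W l j * g j) :
    dff lam (y + z) n =
      ∑ j ∈ range (n + 1), (∑ l ∈ Icc j n, (n.choose l : ℝ) * dff lam z (n - l) * W l j) * g j := by
  calc dff lam (y + z) n
      = ∑ l ∈ range (n + 1), ∑ j ∈ range (l + 1),
          (n.choose l : ℝ) * dff lam z (n - l) * W l j * g j := by
        rw [dff_add]
        refine sum_congr rfl fun l hl => ?_
        rw [hy l (Nat.lt_succ_iff.mp (mem_range.mp hl)), sum_mul, mul_sum]
        exact sum_congr rfl fun j _ => by ring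
    _ = _ := by
        simp only [range_eq_Ico]
        rw [← sum_Ico_Ico_comm]
        simp only [Ico_add_one_right_eq_Icc, sum_mul]

theorem stmt15 (m : ℕ) (hm : 0 < m) (r : ℕ) (lam : ℝ) (Wr Wr1 : ℕ → ℕ → ℝ)
    (hWr : ∀ n : ℕ, ∀ x : ℝ,
      dff lam ((m : ℝ) * x + r) n = ∑ k ∈ range (n + 1), Wr n k * (m : ℝ) ^ k * dff 1 x k)
    (hWr1 : ∀ n : ℕ, ∀ x : ℝ,
      dff lam ((m : ℝ) * x + (r + 1)) n = ∑ k ∈ range (n + 1), Wr1 n k * (m : ℝ) ^ k * dff 1 x k) :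
    ∀ n k : ℕ, k ≤ n →
      Wr1 n k = ∑ l ∈ Finset.Icc k n, (n.choose l : ℝ) * dff lam 1 (n - l) * Wr l k := by
  intro n k hk
  have hcoeff := eq_of_sum_mul_dff_one_eq
    (a := fun j => Wr1 n j * (m : ℝ) ^ j)
    (b := fun j => (∑ l ∈ Icc j n, (n.choose l : ℝ) * dff lam 1 (n - l) * Wr l j) * (m : ℝ) ^ j)
    fun x => by
      rw [← hWr1, ← add_assoc, dff_add_eq_sum_of_expansion lam _ 1 Wr
        (fun j => (m : ℝ) ^ j * dff 1 x j) n fun l _ => by simp only [hWr l x, mul_assoc]]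
      simp only [mul_assoc]
  exact mul_right_cancel₀ (pow_ne_zero k (Nat.cast_pos.mpr hm).ne')
    (hcoeff k (Nat.lt_succ_of_le hk))
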